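/- arXiv:2402.15877 — 5 statements merged into one kernel-verified Lean document; each statement's English description precedes it below -/
import Mathlib

section
/- Let L be a factorial language over a finite alphabet such that L_n is nonempty for every n. Then lim_{n→∞} r(n)/p(n) = 1 if and only if L is almost prolongable and lim_{n→∞} p(n+1)/p(n) = 1. (This is the combinatorial heart of Theorem 1.1, identifying the complexity condition (5) with the local condition that almost every word of length n prolongs uniquely on both sides.) -/
open Filter Topology

variable {A : Type*}

/-- The set of words of `L` of length `n`. -/
def Ln (L : Set (List A)) (n : ℕ) : Set (List A) := {w | w ∈ L ∧ w.length = n}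

/-- The complexity function `p n = |L_n|`. -/
noncomputable def cplx (L : Set (List A)) (n : ℕ) : ℕ := Nat.card (Ln L n)

/-- A language is factorial if it is closed under taking contiguous subwords. -/
def IsFactorial (L : Set (List A)) : Prop := ∀ u v : List A, u ∈ L → v <:+: u → v ∈ L

/-- `w` is left-prolongable in `L`. -/
def LeftProlongable (L : Set (List A)) (w : List A) : Prop := ∃ a : A, (a :: w) ∈ L

/-- `w` is right-prolongable in `L`. -/
def RightProlongable (L : Set (List A)) (w : List A) : Prop := ∃ b : A, (w ++ [b]) ∈ L

/-- `e_l(n)`: the number of words of length `n` in `L` that are not left-prolongable. -/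
noncomputable def eL (L : Set (List A)) (n : ℕ) : ℕ :=
  Nat.card {w : List A | w ∈ Ln L n ∧ ¬ LeftProlongable L w}

/-- `e_r(n)`: the number of words of length `n` in `L` that are not right-prolongable. -/
noncomputable def eR (L : Set (List A)) (n : ℕ) : ℕ :=
  Nat.card {w : List A | w ∈ Ln L n ∧ ¬ RightProlongable L w}

/-- `L` is almost prolongable: `e_l(n)/p(n) → 0` and `e_r(n)/p(n) → 0`. -/
def AlmostProlongable (L : Set (List A)) : Prop :=
  Tendsto (fun n => (eL L n : ℝ) / (cplx L n : ℝ)) atTop (𝓝 0) ∧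
  Tendsto (fun n => (eR L n : ℝ) / (cplx L n : ℝ)) atTop (𝓝 0)

/-- `r(n)`: words of length `n` having exactly one left and exactly one right prolongation. -/
noncomputable def rBoth (L : Set (List A)) (n : ℕ) : ℕ :=
  Nat.card {w : List A | w ∈ Ln L n ∧ (∃! a : A, (a :: w) ∈ L) ∧ (∃! b : A, (w ++ [b]) ∈ L)}

/-! Write `ℓ w` and `ρ w` for the numbers of left and right prolongations of `w ∈ L_n`. Since `L`
is factorial, `∑ ℓ w = ∑ ρ w = p (n + 1)`, and `ℓ w ≤ k`. Hence `p (n + 1) / p n` lies between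
`r n / p n` and `k - (k - 1) r n / p n`, and non-prolongable words are among those not counted by
`r n`; this gives one direction. Conversely, counting pointwise,
`1 - r n / p n ≤ 2 (p (n + 1) / p n - 1) + 2 (e_l n + e_r n) / p n`. -/

section Counting

open Finset

section Finite

variable [Finite A] (L : Set (List A))

theorem finite_Ln (n : ℕ) : (Ln L n).Finite :=
  (List.finite_length_eq A n).subset fun _ hw => hw.2

noncomputable def LnFinset (n : ℕ) : Finset (List A) := (finite_Ln L n).toFinset

theorem mem_LnFinset {n : ℕ} {w : List A} : w ∈ LnFinset L n ↔ w ∈ L ∧ w.length = n := by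
  simp [LnFinset, Ln]

theorem cplx_eq_card (n : ℕ) : cplx L n = #(LnFinset L n) := by
  rw [cplx, Nat.card_coe_set_eq, Set.ncard_eq_toFinset_card _ (finite_Ln L n), LnFinset]

theorem natCard_sep_Ln (P : List A → Prop) [DecidablePred P] (n : ℕ) :
    Nat.card {w | w ∈ Ln L n ∧ P w} = #{w ∈ LnFinset L n | P w} := by
  have hset : {w | w ∈ Ln L n ∧ P w} = ↑({w ∈ LnFinset L n | P w}) := by
    ext w
    simp [mem_LnFinset, Ln]
  rw [hset, Nat.card_coe_set_eq, Set.ncard_coe_finset]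

variable {L} in
theorem cplx_pos (hne : ∀ n, (Ln L n).Nonempty) (n : ℕ) : 0 < cplx L n := by
  obtain ⟨w, hw⟩ := hne n
  rw [cplx_eq_card]
  exact card_pos.2 ⟨w, (mem_LnFinset L).2 hw⟩

end Finite

open scoped Classical

variable [Fintype A] (L : Set (List A))

-- `extCount L List.cons w` and `extCount L (fun b w => w ++ [b]) w` count the left and the
-- right prolongations of `w`.
noncomputable def extCount (f : A → List A → List A) (w : List A) : ℕ := #{a | f a w ∈ L}

variable {L}

theorem extCount_le_card (f : A → List A → List A) (w : List A) :
    extCount L f w ≤ Fintype.card A :=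
  card_filter_le _ _

theorem extCount_eq_zero_iff {f : A → List A → List A} {w : List A} :
    extCount L f w = 0 ↔ ∀ a, f a w ∉ L := by
  simp [extCount, filter_eq_empty_iff]

theorem extCount_eq_one_iff {f : A → List A → List A} {w : List A} :
    extCount L f w = 1 ↔ ∃! a, f a w ∈ L :=
  (Fintype.existsUnique_iff_card_one _).symm

theorem cplx_succ_eq_sum_extCount (hfac : IsFactorial L) (f : A → List A → List A)
    (hf_inj : ∀ a b v w, f a v = f b w → a = b ∧ v = w)
    (hf_length : ∀ a w, (f a w).length = w.length + 1)
    (hf_surj : ∀ u, u ≠ [] → ∃ a w, f a w = u ∧ w <:+: u) (n : ℕ) :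
    cplx L (n + 1) = ∑ w ∈ LnFinset L n, extCount L f w := by
  rw [cplx_eq_card]
  unfold extCount
  rw [← card_sigma]
  symm
  refine card_bij (fun x _ => f x.2 x.1) ?_ ?_ ?_
  · rintro ⟨w, a⟩ hx
    simp only [mem_sigma, mem_filter_univ, mem_LnFinset] at hx ⊢
    exact ⟨hx.2, by rw [hf_length, hx.1.2]⟩
  · rintro ⟨w, a⟩ _ ⟨v, b⟩ _ h
    obtain ⟨rfl, rfl⟩ := hf_inj _ _ _ _ h
    rfl
  · intro u hu
    rw [mem_LnFinset] at hu
    obtain ⟨a, w, rfl, hw⟩ := hf_surj u (List.ne_nil_of_length_eq_add_one hu.2)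
    refine ⟨⟨w, a⟩, ?_, rfl⟩
    simp only [mem_sigma, mem_filter_univ, mem_LnFinset]
    exact ⟨⟨hfac _ _ hu.1 hw, by simpa [hf_length] using hu.2⟩, hu.1⟩

theorem cplx_succ_eq_sum_left (hfac : IsFactorial L) (n : ℕ) :
    cplx L (n + 1) = ∑ w ∈ LnFinset L n, extCount L List.cons w :=
  cplx_succ_eq_sum_extCount hfac List.cons (fun _ _ _ _ => List.cons.inj) (fun _ _ => rfl)
    (fun u hu => ⟨u.head hu, u.tail, List.cons_head_tail hu, (List.tail_suffix u).isInfix⟩) n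

theorem cplx_succ_eq_sum_right (hfac : IsFactorial L) (n : ℕ) :
    cplx L (n + 1) = ∑ w ∈ LnFinset L n, extCount L (fun b w => w ++ [b]) w :=
  cplx_succ_eq_sum_extCount hfac (fun b w => w ++ [b])
    (fun _ _ _ _ h => (List.append_inj' h rfl).symm.imp List.singleton_inj.1 id)
    (fun _ _ => by simp)
    (fun u hu => ⟨u.getLast hu, u.dropLast, List.dropLast_append_getLast hu,
      (List.dropLast_prefix u).isInfix⟩) n

theorem eL_eq_sum (n : ℕ) :
    eL L n = ∑ w ∈ LnFinset L n, if extCount L List.cons w = 0 then 1 else 0 := by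
  rw [eL, natCard_sep_Ln, ← card_filter]
  exact congrArg card <| filter_congr fun w _ => by simp [extCount_eq_zero_iff, LeftProlongable]

theorem eR_eq_sum (n : ℕ) :
    eR L n = ∑ w ∈ LnFinset L n, if extCount L (fun b w => w ++ [b]) w = 0 then 1 else 0 := by
  rw [eR, natCard_sep_Ln, ← card_filter]
  exact congrArg card <| filter_congr fun w _ => by simp [extCount_eq_zero_iff, RightProlongable]

theorem rBoth_eq_sum (n : ℕ) :
    rBoth L n = ∑ w ∈ LnFinset L n,
      if extCount L List.cons w = 1 ∧ extCount L (fun b w => w ++ [b]) w = 1 then 1 else 0 := by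
  rw [rBoth, natCard_sep_Ln, ← card_filter]
  exact congrArg card <| filter_congr fun w _ => by rw [extCount_eq_one_iff, extCount_eq_one_iff]

theorem rBoth_add_eL_le_cplx (n : ℕ) : rBoth L n + eL L n ≤ cplx L n := by
  rw [rBoth_eq_sum, eL_eq_sum, cplx_eq_card, card_eq_sum_ones, ← sum_add_distrib]
  refine sum_le_sum fun w _ => ?_
  split_ifs <;> omega

theorem rBoth_add_eR_le_cplx (n : ℕ) : rBoth L n + eR L n ≤ cplx L n := by
  rw [rBoth_eq_sum, eR_eq_sum, cplx_eq_card, card_eq_sum_ones, ← sum_add_distrib]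
  refine sum_le_sum fun w _ => ?_
  split_ifs <;> omega

theorem rBoth_le_cplx_succ (hfac : IsFactorial L) (n : ℕ) : rBoth L n ≤ cplx L (n + 1) := by
  rw [rBoth_eq_sum, cplx_succ_eq_sum_left hfac]
  refine sum_le_sum fun w _ => ?_
  split_ifs <;> omega

theorem cplx_succ_add_mul_rBoth_le (hfac : IsFactorial L) (n : ℕ) :
    cplx L (n + 1) + Fintype.card A * rBoth L n ≤ Fintype.card A * cplx L n + rBoth L n := by
  rw [rBoth_eq_sum, cplx_succ_eq_sum_left hfac, cplx_eq_card, card_eq_sum_ones]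
  simp only [mul_sum, ← sum_add_distrib]
  refine sum_le_sum fun w _ => ?_
  have := extCount_le_card (L := L) List.cons w
  split_ifs <;> omega

/-- A word not counted by `rBoth` has no prolongation, or at least two, on some side; on each
side the words with at least two prolongations number at most `p (n + 1) - p n + e n`. -/
theorem three_mul_cplx_le (hfac : IsFactorial L) (n : ℕ) :
    3 * cplx L n ≤ rBoth L n + 2 * cplx L (n + 1) + 2 * eL L n + 2 * eR L n := by
  rw [two_mul (cplx L (n + 1))]
  nth_rewrite 1 [cplx_succ_eq_sum_left hfac]
  rw [cplx_succ_eq_sum_right hfac, rBoth_eq_sum, eL_eq_sum, eR_eq_sum, cplx_eq_card,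
    card_eq_sum_ones]
  simp only [mul_sum, ← sum_add_distrib]
  refine sum_le_sum fun w _ => ?_
  split_ifs <;> omega

end Counting

section Ratios

variable [Fintype A] {L : Set (List A)}

theorem almostProlongable_of_tendsto_rBoth_div
    (h : Tendsto (fun n => (rBoth L n : ℝ) / cplx L n) atTop (𝓝 1)) : AlmostProlongable L := by
  have hgap : Tendsto (fun n => 1 - (rBoth L n : ℝ) / cplx L n) atTop (𝓝 0) := by
    simpa using (tendsto_const_nhds (x := (1 : ℝ))).sub h
  have hsqueeze (e : ℕ → ℕ) (he : ∀ n, rBoth L n + e n ≤ cplx L n) :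
      Tendsto (fun n => (e n : ℝ) / cplx L n) atTop (𝓝 0) := by
    refine squeeze_zero (fun n => by positivity) (fun n => ?_) hgap
    have hdiv : ((rBoth L n : ℝ) + e n) / cplx L n ≤ 1 :=
      div_le_one_of_le₀ (by exact_mod_cast he n) (by positivity)
    rw [add_div] at hdiv
    linarith
  exact ⟨hsqueeze _ rBoth_add_eL_le_cplx, hsqueeze _ rBoth_add_eR_le_cplx⟩

theorem tendsto_cplx_succ_div_of_tendsto_rBoth_div (hfac : IsFactorial L)
    (hne : ∀ n, (Ln L n).Nonempty)
    (h : Tendsto (fun n => (rBoth L n : ℝ) / cplx L n) atTop (𝓝 1)) :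
    Tendsto (fun n => (cplx L (n + 1) : ℝ) / cplx L n) atTop (𝓝 1) := by
  have hupper : Tendsto (fun n => (Fintype.card A : ℝ) + (rBoth L n : ℝ) / cplx L n
      - Fintype.card A * ((rBoth L n : ℝ) / cplx L n)) atTop (𝓝 1) := by
    simpa using ((tendsto_const_nhds (x := (Fintype.card A : ℝ))).add h).sub
      (h.const_mul (Fintype.card A : ℝ))
  refine tendsto_of_tendsto_of_tendsto_of_le_of_le h hupper (fun n => ?_) (fun n => ?_)
  · gcongr
    exact_mod_cast rBoth_le_cplx_succ hfac n
  · have hp : (0 : ℝ) < cplx L n := by exact_mod_cast cplx_pos hne n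
    have hle : (cplx L (n + 1) : ℝ) + Fintype.card A * rBoth L n
        ≤ Fintype.card A * cplx L n + rBoth L n := by
      exact_mod_cast cplx_succ_add_mul_rBoth_le hfac n
    have hdiv := div_le_div_of_nonneg_right hle hp.le
    simp only [add_div, mul_div_assoc, div_self hp.ne', mul_one] at hdiv
    linarith

theorem tendsto_rBoth_div_of_almostProlongable (hfac : IsFactorial L)
    (hne : ∀ n, (Ln L n).Nonempty) (hL : AlmostProlongable L)
    (hq : Tendsto (fun n => (cplx L (n + 1) : ℝ) / cplx L n) atTop (𝓝 1)) :
    Tendsto (fun n => (rBoth L n : ℝ) / cplx L n) atTop (𝓝 1) := by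
  have hlower : Tendsto (fun n => 1 - 2 * ((cplx L (n + 1) : ℝ) / cplx L n - 1)
      - 2 * ((eL L n : ℝ) / cplx L n) - 2 * ((eR L n : ℝ) / cplx L n)) atTop (𝓝 1) := by
    simpa using (((tendsto_const_nhds (x := (1 : ℝ))).sub ((hq.sub_const 1).const_mul 2)).sub
      (hL.1.const_mul 2)).sub (hL.2.const_mul 2)
  refine tendsto_of_tendsto_of_tendsto_of_le_of_le hlower tendsto_const_nhds (fun n => ?_)
    (fun n => ?_)
  · have hp : (0 : ℝ) < cplx L n := by exact_mod_cast cplx_pos hne n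
    have hle : 3 * (cplx L n : ℝ)
        ≤ rBoth L n + 2 * cplx L (n + 1) + 2 * eL L n + 2 * eR L n := by
      exact_mod_cast three_mul_cplx_le hfac n
    have hdiv := div_le_div_of_nonneg_right hle hp.le
    simp only [add_div, mul_div_assoc, div_self hp.ne', mul_one] at hdiv
    linarith
  · have hle : (rBoth L n : ℝ) ≤ cplx L n := by
      exact_mod_cast (Nat.le_add_right _ _).trans (rBoth_add_eL_le_cplx n)
    exact div_le_one_of_le₀ hle (by positivity)

end Ratios

theorem rauzy_ratio_iff_almost_prolongable {A : Type*} [Fintype A]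
    (L : Set (List A)) (hfac : IsFactorial L) (hne : ∀ n : ℕ, (Ln L n).Nonempty) :
    Tendsto (fun n => (rBoth L n : ℝ) / (cplx L n : ℝ)) atTop (𝓝 1) ↔
      (AlmostProlongable L ∧
        Tendsto (fun n => (cplx L (n + 1) : ℝ) / (cplx L n : ℝ)) atTop (𝓝 1)) :=
  ⟨fun h => ⟨almostProlongable_of_tendsto_rBoth_div h,
      tendsto_cplx_succ_div_of_tendsto_rBoth_div hfac hne h⟩,
    fun ⟨hL, hq⟩ => tendsto_rBoth_div_of_almostProlongable hfac hne hL hq⟩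
end

section
/- Let p : ℕ → ℝ satisfy p(n) ≥ 1 for all n and p(n)/c^n → 0 as n → ∞ for every real c > 1. Then for every positive integer d there exist infinitely many n such that p(n+2d) < (1 + 1/d)·p(n). (This is the key analytic step, Equation (2.2), in the proof of Lemma 2.3 of the paper.) -/
open Filter Topology

theorem subexponential_infinitely_many_small_ratio (p : ℕ → ℝ)
    (hp : ∀ n, 1 ≤ p n)
    (hsub : ∀ c : ℝ, 1 < c → Tendsto (fun n => p n / c ^ n) atTop (𝓝 0)) :
    ∀ d : ℕ, 0 < d → ∀ N : ℕ, ∃ n ≥ N, p (n + 2 * d) < (1 + 1 / (d : ℝ)) * p n := by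
  intro d hd N
  by_contra h
  push_neg at h
  set a : ℝ := 1 + 1 / (d : ℝ) with ha
  have hd0 : (0 : ℝ) < d := Nat.cast_pos.mpr hd
  have ha1 : 1 < a := by
    have h' : 0 < 1 / (d : ℝ) := by positivity
    simp only [ha]
    linarith
  have ha0 : 0 < a := by linarith
  have h2d : (0 : ℝ) < (2 * d : ℕ) := by
    push_cast; positivity
  set c : ℝ := a ^ (((2 * d : ℕ) : ℝ)⁻¹) with hc
  have hc1 : 1 < c := by
    rw [hc]
    exact Real.one_lt_rpow_iff_of_pos ha0 |>.mpr (Or.inl ⟨ha1, by positivity⟩)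
  have hc0 : 0 < c := lt_trans one_pos hc1
  have hcpow : c ^ (2 * d) = a := by
    rw [hc, ← Real.rpow_natCast (a ^ (((2 * d : ℕ) : ℝ)⁻¹)) (2 * d),
      ← Real.rpow_mul (le_of_lt ha0), inv_mul_cancel₀ (ne_of_gt h2d), Real.rpow_one]
  -- key growth inequality
  have key : ∀ k : ℕ, a ^ k ≤ p (N + 2 * d * k) := by
    intro k
    induction k with
    | zero => simpa using hp N
    | succ k ih =>
      have h1 := h (N + 2 * d * k) (Nat.le_add_right _ _)
      have h2 : a * a ^ k ≤ a * p (N + 2 * d * k) :=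
        mul_le_mul_of_nonneg_left ih (le_of_lt ha0)
      have h3 : N + 2 * d * (k + 1) = N + 2 * d * k + 2 * d := by ring
      calc a ^ (k + 1) = a * a ^ k := by ring
        _ ≤ a * p (N + 2 * d * k) := h2
        _ ≤ p (N + 2 * d * k + 2 * d) := h1
        _ = p (N + 2 * d * (k + 1)) := by rw [← h3]
  -- subsequence tends to 0
  have hf : Tendsto (fun k : ℕ => N + 2 * d * k) atTop atTop := by
    apply tendsto_atTop_mono (fun k => ?_) tendsto_id
    have h1 : k ≤ 2 * d * k := Nat.le_mul_of_pos_left k (by omega)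
    exact le_trans h1 (Nat.le_add_left _ _)
  have h0 := (hsub c hc1).comp hf
  have hlb : ∀ k : ℕ, 1 / c ^ N ≤ p (N + 2 * d * k) / c ^ (N + 2 * d * k) := by
    intro k
    have hck : (0:ℝ) < c ^ (N + 2 * d * k) := pow_pos hc0 _
    rw [le_div_iff₀ hck]
    have hre : c ^ (N + 2 * d * k) = c ^ N * a ^ k := by
      rw [pow_add, pow_mul, hcpow]
    rw [hre]
    have : (1 / c ^ N) * (c ^ N * a ^ k) = a ^ k := by
      field_simp
    rw [this]
    exact key k
  have hle : 1 / c ^ N ≤ 0 :=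
    ge_of_tendsto h0 (Filter.Eventually.of_forall (fun k => hlb k))
  have : (0:ℝ) < 1 / c ^ N := by positivity
  linarith
end

section
/- Let L be a factorial and almost prolongable language over a finite alphabet with unbounded complexity, and suppose there exists N₀ such that e(n) = 0 for all n ≥ N₀. Suppose there exist reals α ∈ [0, 1/2) and β ∈ [1, 3/2) such that e_l(n) = O(n^α), e_r(n) = O(n^α), and p(n) = Θ(n^β). Then lim_{n→∞} p(n+1)/p(n) = 1. (Second case of Corollary 2.8 of the paper, stated via the paper's equivalent complexity criterion for convergence of the Rauzy digraphs to the directed line.) -/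
open Filter Topology

variable {A : Type*}

/-- `e(n)`: the number of words of length `n` in `L` that are neither left- nor
right-prolongable. -/
noncomputable def eBoth (L : Set (List A)) (n : ℕ) : ℕ :=
  Nat.card {w : List A | w ∈ Ln L n ∧ ¬ LeftProlongable L w ∧ ¬ RightProlongable L w}

namespace RauzyAux
open Finset

variable [Fintype A] (L : Set (List A))

lemma finite_Ln (n : ℕ) : (Ln L n).Finite :=
  Set.Finite.subset (List.finite_length_eq (α := A) (n := n)) (fun _ hw => hw.2)

/-- `L_n` as a finset. -/
noncomputable def Fn (n : ℕ) : Finset (List A) := (finite_Ln L n).toFinset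

@[simp] lemma mem_Fn {n : ℕ} {w : List A} : w ∈ Fn L n ↔ w ∈ L ∧ w.length = n := by
  simp [Fn, Set.Finite.mem_toFinset, Ln]

lemma cplx_eq (n : ℕ) : cplx L n = (Fn L n).card :=
  Nat.card_eq_card_finite_toFinset (finite_Ln L n)

open Classical in
/-- number of right extensions of a word -/
noncomputable def rdeg (v : List A) : ℕ := (univ.filter fun b : A => v ++ [b] ∈ L).card

open Classical in
noncomputable def ldeg (v : List A) : ℕ := (univ.filter fun a : A => a :: v ∈ L).card

lemma rdeg_le (v : List A) : rdeg L v ≤ Fintype.card A := by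
  classical simpa [rdeg] using Finset.card_filter_le univ _

lemma ldeg_le (v : List A) : ldeg L v ≤ Fintype.card A := by
  classical simpa [ldeg] using Finset.card_filter_le univ _

lemma rdeg_eq_zero_iff {v : List A} : rdeg L v = 0 ↔ ¬ RightProlongable L v := by
  classical
  simp [rdeg, Finset.card_eq_zero, Finset.filter_eq_empty_iff, RightProlongable]

lemma ldeg_eq_zero_iff {v : List A} : ldeg L v = 0 ↔ ¬ LeftProlongable L v := by
  classical
  simp [ldeg, Finset.card_eq_zero, Finset.filter_eq_empty_iff, LeftProlongable]

open Classical in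
lemma eR_eq (n : ℕ) : eR L n = ((Fn L n).filter fun v => rdeg L v = 0).card := by
  rw [eR]
  have h : {w : List A | w ∈ Ln L n ∧ ¬ RightProlongable L w}
      = ↑((Fn L n).filter fun v => rdeg L v = 0) := by
    ext w
    simp [Ln, rdeg_eq_zero_iff, and_assoc]
  rw [h]
  exact Nat.card_eq_finsetCard _

open Classical in
lemma eL_eq (n : ℕ) : eL L n = ((Fn L n).filter fun v => ldeg L v = 0).card := by
  rw [eL]
  have h : {w : List A | w ∈ Ln L n ∧ ¬ LeftProlongable L w}
      = ↑((Fn L n).filter fun v => ldeg L v = 0) := by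
    ext w
    simp [Ln, ldeg_eq_zero_iff, and_assoc]
  rw [h]
  exact Nat.card_eq_finsetCard _

end RauzyAux

namespace RauzyAux
open Finset

variable [Fintype A] (L : Set (List A))

open Classical in
/-- The fiber of the "drop last letter" map over `v` is the image of the right
extensions. -/
lemma fiber_dropLast_card {n : ℕ} {v : List A} (hv : v ∈ Fn L n) :
    ((Fn L (n+1)).filter fun u => u.dropLast = v).card = rdeg L v := by
  rw [rdeg]
  rw [show ((Fn L (n+1)).filter fun u => u.dropLast = v)
      = (univ.filter fun b : A => v ++ [b] ∈ L).image (fun b => v ++ [b]) by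
    ext u
    simp only [Finset.mem_filter, mem_Fn, Finset.mem_image, Finset.mem_univ, true_and]
    constructor
    · rintro ⟨⟨huL, hulen⟩, hud⟩
      have hne : u ≠ [] := by intro h; simp [h] at hulen
      refine ⟨u.getLast hne, ?_, ?_⟩
      · rw [← hud, List.dropLast_append_getLast hne]; exact huL
      · rw [← hud, List.dropLast_append_getLast hne]
    · rintro ⟨b, hb, rfl⟩
      have hvlen : v.length = n := (mem_Fn L |>.1 hv).2
      exact ⟨⟨hb, by simp [hvlen]⟩, List.dropLast_concat⟩]
  rw [Finset.card_image_of_injective _ (fun b b' h => by simpa using h)]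

open Classical in
lemma fiber_tail_card {n : ℕ} {v : List A} (hv : v ∈ Fn L n) :
    ((Fn L (n+1)).filter fun u => u.tail = v).card = ldeg L v := by
  rw [ldeg]
  rw [show ((Fn L (n+1)).filter fun u => u.tail = v)
      = (univ.filter fun a : A => a :: v ∈ L).image (fun a => a :: v) by
    ext u
    simp only [Finset.mem_filter, mem_Fn, Finset.mem_image, Finset.mem_univ, true_and]
    constructor
    · rintro ⟨⟨huL, hulen⟩, hud⟩
      have hne : u ≠ [] := by intro h; simp [h] at hulen
      obtain ⟨a, t, rfl⟩ := List.exists_cons_of_ne_nil hne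
      simp only [List.tail_cons] at hud
      subst hud
      exact ⟨a, huL, rfl⟩
    · rintro ⟨a, ha, rfl⟩
      have hvlen : v.length = n := (mem_Fn L |>.1 hv).2
      exact ⟨⟨ha, by simp [hvlen]⟩, rfl⟩]
  rw [Finset.card_image_of_injective _ (fun a a' h => by simpa using h)]

lemma dropLast_mem_Fn (hfac : IsFactorial L) {n : ℕ} {u : List A} (hu : u ∈ Fn L (n+1)) :
    u.dropLast ∈ Fn L n := by
  obtain ⟨huL, hlen⟩ := (mem_Fn L).1 hu
  refine (mem_Fn L).2 ⟨hfac u _ huL (List.dropLast_prefix u).isInfix, by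
    simp [List.length_dropLast, hlen]⟩

lemma tail_mem_Fn (hfac : IsFactorial L) {n : ℕ} {u : List A} (hu : u ∈ Fn L (n+1)) :
    u.tail ∈ Fn L n := by
  obtain ⟨huL, hlen⟩ := (mem_Fn L).1 hu
  refine (mem_Fn L).2 ⟨hfac u _ huL (List.tail_suffix u).isInfix, by
    simp [List.length_tail, hlen]⟩

open Classical in
lemma card_succ_right (hfac : IsFactorial L) (n : ℕ) :
    cplx L (n+1) = ∑ v ∈ Fn L n, rdeg L v := by
  rw [cplx_eq]
  rw [Finset.card_eq_sum_card_fiberwise (f := fun u => u.dropLast) (t := Fn L n)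
    (fun u hu => dropLast_mem_Fn L hfac hu)]
  exact Finset.sum_congr rfl fun v hv => fiber_dropLast_card L hv

open Classical in
lemma card_succ_left (hfac : IsFactorial L) (n : ℕ) :
    cplx L (n+1) = ∑ v ∈ Fn L n, ldeg L v := by
  rw [cplx_eq]
  rw [Finset.card_eq_sum_card_fiberwise (f := fun u => u.tail) (t := Fn L n)
    (fun u hu => tail_mem_Fn L hfac hu)]
  exact Finset.sum_congr rfl fun v hv => fiber_tail_card L hv

/-- `R(n) = Σ (rdeg v - 1)⁺`, the weighted count of right special words. -/
noncomputable def Rn (n : ℕ) : ℕ := ∑ v ∈ Fn L n, (rdeg L v - 1)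

noncomputable def Lam (n : ℕ) : ℕ := ∑ v ∈ Fn L n, (ldeg L v - 1)

open Classical in
/-- Number of bispecial words of length `n`. -/
noncomputable def Bn (n : ℕ) : ℕ :=
  ((Fn L n).filter fun v => 2 ≤ ldeg L v ∧ 2 ≤ rdeg L v).card

open Classical in
lemma Rn_identity (hfac : IsFactorial L) (n : ℕ) :
    Rn L n + cplx L n = cplx L (n+1) + eR L n := by
  have h1 : cplx L (n+1) = ∑ v ∈ Fn L n, rdeg L v := card_succ_right L hfac n
  have h2 : ∀ v, rdeg L v = (rdeg L v - 1) + min 1 (rdeg L v) := by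
    intro v; rcases Nat.eq_zero_or_pos (rdeg L v) with h | h <;> omega
  have h3 : ∑ v ∈ Fn L n, rdeg L v
      = Rn L n + ∑ v ∈ Fn L n, min 1 (rdeg L v) := by
    rw [Rn, ← Finset.sum_add_distrib]
    exact Finset.sum_congr rfl fun v _ => h2 v
  have h4 : ∑ v ∈ Fn L n, min 1 (rdeg L v)
      = ((Fn L n).filter fun v => ¬ (rdeg L v = 0)).card := by
    rw [Finset.card_eq_sum_ones, Finset.sum_filter]
    exact Finset.sum_congr rfl fun v _ => by by_cases h : rdeg L v = 0 <;> simp [h] <;> omega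
  have h5 : ((Fn L n).filter fun v => ¬ (rdeg L v = 0)).card + eR L n = cplx L n := by
    rw [eR_eq, cplx_eq, add_comm]
    exact Finset.card_filter_add_card_filter_not (p := fun v => rdeg L v = 0)
  omega

open Classical in
lemma Lam_identity (hfac : IsFactorial L) (n : ℕ) :
    Lam L n + cplx L n = cplx L (n+1) + eL L n := by
  have h1 : cplx L (n+1) = ∑ v ∈ Fn L n, ldeg L v := card_succ_left L hfac n
  have h3 : ∑ v ∈ Fn L n, ldeg L v
      = Lam L n + ∑ v ∈ Fn L n, min 1 (ldeg L v) := by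
    rw [Lam, ← Finset.sum_add_distrib]
    exact Finset.sum_congr rfl fun v _ => by
      rcases Nat.eq_zero_or_pos (ldeg L v) with h | h <;> omega
  have h4 : ∑ v ∈ Fn L n, min 1 (ldeg L v)
      = ((Fn L n).filter fun v => ¬ (ldeg L v = 0)).card := by
    rw [Finset.card_eq_sum_ones, Finset.sum_filter]
    exact Finset.sum_congr rfl fun v _ => by by_cases h : ldeg L v = 0 <;> simp [h] <;> omega
  have h5 : ((Fn L n).filter fun v => ¬ (ldeg L v = 0)).card + eL L n = cplx L n := by
    rw [eL_eq, cplx_eq, add_comm]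
    exact Finset.card_filter_add_card_filter_not (p := fun v => ldeg L v = 0)
  omega

end RauzyAux

namespace RauzyAux
open Finset

variable [Fintype A] (L : Set (List A))

open Classical in
lemma rdeg_tail_le {u : List A} (hfac : IsFactorial L) (hne : u ≠ []) :
    rdeg L u ≤ rdeg L u.tail := by
  apply Finset.card_le_card
  intro b hb
  simp only [Finset.mem_filter, Finset.mem_univ, true_and] at hb ⊢
  obtain ⟨a, t, rfl⟩ := List.exists_cons_of_ne_nil hne
  exact hfac _ _ hb ⟨[a], [], by simp⟩

open Classical in
/-- Transport inequality: `R(n+1) ≤ R(n) + k² B(n)`. -/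
lemma Rn_succ_le (hfac : IsFactorial L) (n : ℕ) :
    Rn L (n+1) ≤ Rn L n + (Fintype.card A)^2 * Bn L n := by
  classical
  have hstep : Rn L (n+1) = ∑ v ∈ Fn L n,
      ∑ u ∈ (Fn L (n+1)).filter fun u => u.tail = v, (rdeg L u - 1) := by
    rw [Rn, Finset.sum_fiberwise_of_maps_to (fun u hu => tail_mem_Fn L hfac hu)]
  rw [hstep]
  have hinner : ∀ v ∈ Fn L n,
      (∑ u ∈ (Fn L (n+1)).filter fun u => u.tail = v, (rdeg L u - 1))
        ≤ ldeg L v * (rdeg L v - 1) := by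
    intro v hv
    calc ∑ u ∈ (Fn L (n+1)).filter fun u => u.tail = v, (rdeg L u - 1)
        ≤ ∑ _u ∈ (Fn L (n+1)).filter fun u => u.tail = v, (rdeg L v - 1) := by
          apply Finset.sum_le_sum
          intro u hu
          obtain ⟨hu1, hu2⟩ := Finset.mem_filter.1 hu
          have hne : u ≠ [] := by
            intro h
            have := (mem_Fn L).1 hu1 |>.2
            simp [h] at this
          have := rdeg_tail_le L hfac hne
          rw [hu2] at this
          omega
      _ = ((Fn L (n+1)).filter fun u => u.tail = v).card * (rdeg L v - 1) := by
          rw [Finset.sum_const, smul_eq_mul]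
      _ = ldeg L v * (rdeg L v - 1) := by rw [fiber_tail_card L hv]
  calc ∑ v ∈ Fn L n, ∑ u ∈ (Fn L (n+1)).filter fun u => u.tail = v, (rdeg L u - 1)
      ≤ ∑ v ∈ Fn L n, ldeg L v * (rdeg L v - 1) := Finset.sum_le_sum hinner
    _ ≤ ∑ v ∈ Fn L n, ((rdeg L v - 1) + (ldeg L v - 1) * (rdeg L v - 1)) := by
        apply Finset.sum_le_sum
        intro v _
        rcases Nat.eq_zero_or_pos (ldeg L v) with h | h
        · simp [h]
        · obtain ⟨m, hm⟩ := Nat.exists_eq_add_of_le h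
          rw [hm, Nat.add_comm 1 m, Nat.succ_mul]
          simp only [Nat.add_sub_cancel]
          omega
    _ = Rn L n + ∑ v ∈ Fn L n, (ldeg L v - 1) * (rdeg L v - 1) := by
        rw [Finset.sum_add_distrib, Rn]
    _ ≤ Rn L n + (Fintype.card A)^2 * Bn L n := by
        gcongr
        calc ∑ v ∈ Fn L n, (ldeg L v - 1) * (rdeg L v - 1)
            = ∑ v ∈ (Fn L n).filter (fun v => 2 ≤ ldeg L v ∧ 2 ≤ rdeg L v),
                (ldeg L v - 1) * (rdeg L v - 1) := by
              symm
              apply Finset.sum_filter_of_ne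
              intro v _ hne
              constructor <;> by_contra h <;> push_neg at h
              · have : ldeg L v - 1 = 0 := by omega
                simp [this] at hne
              · have : rdeg L v - 1 = 0 := by omega
                simp [this] at hne
          _ ≤ ∑ _v ∈ (Fn L n).filter (fun v => 2 ≤ ldeg L v ∧ 2 ≤ rdeg L v),
                (Fintype.card A)^2 := by
              apply Finset.sum_le_sum
              intro v _
              have h1 := ldeg_le L v
              have h2 := rdeg_le L v
              calc (ldeg L v - 1) * (rdeg L v - 1) ≤ Fintype.card A * Fintype.card A := by
                    apply Nat.mul_le_mul <;> omega
                _ = (Fintype.card A)^2 := (sq (Fintype.card A)).symm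
          _ = Bn L n * (Fintype.card A)^2 := by rw [Finset.sum_const, smul_eq_mul, Bn]
          _ = (Fintype.card A)^2 * Bn L n := Nat.mul_comm _ _

/-- Iterated transport inequality. -/
lemma Rn_le_add_sum (hfac : IsFactorial L) {a b : ℕ} (hab : a ≤ b) :
    Rn L b ≤ Rn L a + (Fintype.card A)^2 * ∑ i ∈ Finset.Ico a b, Bn L i := by
  induction b, hab using Nat.le_induction with
  | base => simp
  | succ m hm ih =>
    have h1 := Rn_succ_le L hfac m
    have h2 : ∑ i ∈ Finset.Ico a (m+1), Bn L i
        = (∑ i ∈ Finset.Ico a m, Bn L i) + Bn L m := by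
      rw [Finset.sum_Ico_succ_top hm]
    rw [h2]
    calc Rn L (m+1) ≤ Rn L m + (Fintype.card A)^2 * Bn L m := h1
      _ ≤ (Rn L a + (Fintype.card A)^2 * ∑ i ∈ Finset.Ico a m, Bn L i)
          + (Fintype.card A)^2 * Bn L m := by omega
      _ = Rn L a + (Fintype.card A)^2
          * ((∑ i ∈ Finset.Ico a m, Bn L i) + Bn L m) := by ring

end RauzyAux

namespace RauzyAux
open Finset

variable [Fintype A] (L : Set (List A))

open Classical in
noncomputable def LSc (n : ℕ) : ℕ := ((Fn L n).filter fun v => 2 ≤ ldeg L v).card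

open Classical in
noncomputable def RSc (n : ℕ) : ℕ := ((Fn L n).filter fun v => 2 ≤ rdeg L v).card

open Classical in
lemma ldeg_take_le (hfac : IsFactorial L) (v : List A) (j : ℕ) :
    ldeg L v ≤ ldeg L (v.take j) := by
  apply Finset.card_le_card
  intro a ha
  simp only [Finset.mem_filter, Finset.mem_univ, true_and] at ha ⊢
  have : a :: v.take j = (a :: v).take (j + 1) := rfl
  rw [this]
  exact hfac _ _ ha (List.take_prefix _ _).isInfix

open Classical in
lemma rdeg_drop_le (hfac : IsFactorial L) (v : List A) (m : ℕ) (hm : m ≤ v.length) :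
    rdeg L v ≤ rdeg L (v.drop m) := by
  apply Finset.card_le_card
  intro b hb
  simp only [Finset.mem_filter, Finset.mem_univ, true_and] at hb ⊢
  have h : v.drop m ++ [b] = (v ++ [b]).drop m := by
    rw [List.drop_append]
    have : m - v.length = 0 := by omega
    simp [this]
  rw [h]
  exact hfac _ _ hb (List.drop_suffix _ _).isInfix

lemma take_mem_Fn (hfac : IsFactorial L) {n j : ℕ} (hj : j ≤ n) {v : List A}
    (hv : v ∈ Fn L n) : v.take j ∈ Fn L j := by
  obtain ⟨hvL, hlen⟩ := (mem_Fn L).1 hv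
  exact (mem_Fn L).2 ⟨hfac _ _ hvL (List.take_prefix _ _).isInfix, by simp [hlen]; omega⟩

lemma drop_mem_Fn (hfac : IsFactorial L) {n m : ℕ} (hm : m ≤ n) {v : List A}
    (hv : v ∈ Fn L n) : v.drop m ∈ Fn L (n - m) := by
  obtain ⟨hvL, hlen⟩ := (mem_Fn L).1 hv
  exact (mem_Fn L).2 ⟨hfac _ _ hvL (List.drop_suffix _ _).isInfix, by simp [hlen]⟩

open Classical in
/-- The key quadratic bound: a bispecial word of length `n` is determined by its
(left special) prefix of length `j` and its (right special) suffix of length `j'`,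
provided `j + j' ≥ n`. -/
lemma Bn_le_mul (hfac : IsFactorial L) {n j j' : ℕ} (hj : j ≤ n) (hj' : j' ≤ n)
    (hjj' : n ≤ j + j') : Bn L n ≤ LSc L j * RSc L j' := by
  rw [Bn, LSc, RSc, ← Finset.card_product]
  apply Finset.card_le_card_of_injOn (fun v => (v.take j, v.drop (n - j')))
  · intro v hv
    obtain ⟨hvF, hvl, hvr⟩ := Finset.mem_filter.1 hv
    have hlen : v.length = n := ((mem_Fn L).1 hvF).2
    refine Finset.mem_product.2 ⟨Finset.mem_filter.2 ⟨take_mem_Fn L hfac hj hvF, ?_⟩,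
      Finset.mem_filter.2 ⟨?_, ?_⟩⟩
    · exact le_trans hvl (ldeg_take_le L hfac v j)
    · have := drop_mem_Fn L hfac (show n - j' ≤ n by omega) hvF
      rwa [show n - (n - j') = j' by omega] at this
    · exact le_trans hvr (rdeg_drop_le L hfac v (n - j') (by omega))
  · intro v hv w hw h
    obtain ⟨h1, h2⟩ := Prod.mk.injEq _ _ _ _ ▸ h
    have hvlen : v.length = n := ((mem_Fn L).1 (Finset.mem_filter.1 hv).1).2
    have hwlen : w.length = n := ((mem_Fn L).1 (Finset.mem_filter.1 hw).1).2
    have hrec : ∀ u : List A, u.length = n →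
        u = u.take j ++ (u.drop (n - j')).drop (j - (n - j')) := by
      intro u hu
      rw [List.drop_drop, show n - j' + (j - (n - j')) = j by omega,
        List.take_append_drop]
    rw [hrec v hvlen, hrec w hwlen, h1, h2]

lemma LSc_le_Lam (n : ℕ) : LSc L n ≤ Lam L n := by
  classical
  rw [LSc, Lam, Finset.card_eq_sum_ones]
  calc ∑ _v ∈ (Fn L n).filter (fun v => 2 ≤ ldeg L v), 1
      ≤ ∑ v ∈ (Fn L n).filter (fun v => 2 ≤ ldeg L v), (ldeg L v - 1) := by
        apply Finset.sum_le_sum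
        intro v hv
        have := (Finset.mem_filter.1 hv).2
        omega
    _ ≤ ∑ v ∈ Fn L n, (ldeg L v - 1) :=
        Finset.sum_le_sum_of_subset (Finset.filter_subset _ _)

lemma RSc_le_Rn (n : ℕ) : RSc L n ≤ Rn L n := by
  classical
  rw [RSc, Rn, Finset.card_eq_sum_ones]
  calc ∑ _v ∈ (Fn L n).filter (fun v => 2 ≤ rdeg L v), 1
      ≤ ∑ v ∈ (Fn L n).filter (fun v => 2 ≤ rdeg L v), (rdeg L v - 1) := by
        apply Finset.sum_le_sum
        intro v hv
        have := (Finset.mem_filter.1 hv).2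
        omega
    _ ≤ ∑ v ∈ Fn L n, (rdeg L v - 1) :=
        Finset.sum_le_sum_of_subset (Finset.filter_subset _ _)

/-- Window telescope: `Σ_{i∈[a,b)} R(i) + p(a) = p(b) + Σ_{i∈[a,b)} e_r(i)`. -/
lemma sum_Rn_window (hfac : IsFactorial L) {a b : ℕ} (hab : a ≤ b) :
    (∑ i ∈ Finset.Ico a b, Rn L i) + cplx L a
      = cplx L b + ∑ i ∈ Finset.Ico a b, eR L i := by
  induction b, hab using Nat.le_induction with
  | base => simp
  | succ m hm ih =>
    rw [Finset.sum_Ico_succ_top hm, Finset.sum_Ico_succ_top hm]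
    have := Rn_identity L hfac m
    omega

lemma sum_Lam_window (hfac : IsFactorial L) {a b : ℕ} (hab : a ≤ b) :
    (∑ i ∈ Finset.Ico a b, Lam L i) + cplx L a
      = cplx L b + ∑ i ∈ Finset.Ico a b, eL L i := by
  induction b, hab using Nat.le_induction with
  | base => simp
  | succ m hm ih =>
    rw [Finset.sum_Ico_succ_top hm, Finset.sum_Ico_succ_top hm]
    have := Lam_identity L hfac m
    omega

/-- Averaging: some element of a window is below average. -/
lemma exists_window_min (f : ℕ → ℕ) {a b : ℕ} (hab : a < b) :
    ∃ j ∈ Finset.Ico a b, (b - a) * f j ≤ ∑ i ∈ Finset.Ico a b, f i := by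
  by_contra hcon
  push_neg at hcon
  have h : ∀ i ∈ Finset.Ico a b, (∑ i ∈ Finset.Ico a b, f i) + 1 ≤ (b - a) * f i :=
    fun i hi => hcon i hi
  have h2 : (b - a) * ((∑ i ∈ Finset.Ico a b, f i) + 1)
      ≤ ∑ i ∈ Finset.Ico a b, (b - a) * f i := by
    calc (b - a) * ((∑ i ∈ Finset.Ico a b, f i) + 1)
        = ∑ _i ∈ Finset.Ico a b, ((∑ i ∈ Finset.Ico a b, f i) + 1) := by
          rw [Finset.sum_const, Nat.card_Ico, smul_eq_mul]
      _ ≤ _ := Finset.sum_le_sum h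
  rw [← Finset.mul_sum] at h2
  have hba : 0 < b - a := by omega
  nlinarith [Finset.sum_le_sum h]

end RauzyAux

namespace RauzyAux
open Finset

variable {A : Type*} [Fintype A]

set_option maxHeartbeats 2000000 in
/-- The central quantitative estimate: under the polynomial hypotheses,
`R(n) = O(n^ρ)` where `ρ = (β + 2 max(β-1,α))/2 < β`. -/
lemma Rn_poly_bound (L : Set (List A)) (hfac : IsFactorial L)
    (α β Cl Cr Cp : ℝ) (Nl Nr Np : ℕ)
    (hα : 0 ≤ α) (hα2 : α < 1/2) (hβ1 : 1 ≤ β) (hβ2 : β < 3/2)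
    (hCl : 1 ≤ Cl) (hCr : 1 ≤ Cr) (hCp : 1 ≤ Cp)
    (hel : ∀ n ≥ Nl, (eL L n : ℝ) ≤ Cl * (n : ℝ) ^ α)
    (her : ∀ n ≥ Nr, (eR L n : ℝ) ≤ Cr * (n : ℝ) ^ α)
    (hp : ∀ n ≥ Np, (cplx L n : ℝ) ≤ Cp * (n : ℝ) ^ β) :
    ∃ C : ℝ, ∃ N : ℕ, ∀ n ≥ N,
      (Rn L n : ℝ) ≤ C * (n : ℝ) ^ ((β + 2 * max (β - 1) α) / 2) := by
  classical
  set γ : ℝ := max (β - 1) α with hγdef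
  have hγ0 : 0 ≤ γ := le_trans hα (le_max_right _ _)
  have hγlt : γ < 1 / 2 := by
    apply max_lt <;> linarith
  set θ : ℝ := (β - 2 * γ) / 2 with hθdef
  have hθpos : 0 < θ := by
    have : 2 * γ < 1 := by linarith
    simp only [hθdef]; linarith
  have hθle : θ ≤ 3 / 4 := by simp only [hθdef]; linarith [le_max_left (β - 1) α, hα]
  set ρ : ℝ := (β + 2 * γ) / 2 with hρdef
  have hρβ : ρ = β - θ := by simp only [hρdef, hθdef]; ring
  have hρθ : ρ = θ + 2 * γ := by simp only [hρdef, hθdef]; ring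
  have hαρ : α ≤ ρ := by
    have : α ≤ γ := le_max_right _ _
    simp only [hρdef]; linarith
  -- the constant
  set K : ℝ := (Fintype.card A : ℝ) ^ 2 with hKdef
  have hK0 : 0 ≤ K := by positivity
  -- eventual conditions
  have hev : ∀ᶠ n : ℕ in atTop,
      ((n : ℝ) ^ θ + 1 ≤ 3 * (n : ℝ) / 8 - 2 ∧ 16 ≤ n) ∧
      (Nl + Nr + Np + 1 ≤ n / 2) := by
    have h34 : ∀ᶠ n : ℕ in atTop, (n : ℝ) ^ θ + 1 ≤ 3 * (n : ℝ) / 8 - 2 := by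
      have ht : Tendsto (fun n : ℕ => (n : ℝ) ^ (θ - 1)) atTop (𝓝 0) := by
        have := (tendsto_rpow_neg_atTop (y := 1 - θ) (by linarith)).comp
          tendsto_natCast_atTop_atTop
        simpa [neg_sub, Function.comp_def] using this
      have hsmall : ∀ᶠ n : ℕ in atTop, (n : ℝ) ^ (θ - 1) ≤ 1 / 16 := by
        have := ht.eventually (ge_mem_nhds (show (0:ℝ) < 1/16 by norm_num))
        filter_upwards [this] with n hn using hn
      filter_upwards [hsmall, eventually_ge_atTop 48] with n hn hn48
      have hn1 : (1 : ℝ) ≤ (n : ℝ) := by exact_mod_cast Nat.one_le_iff_ne_zero.2 (by omega)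
      have hnpos : (0 : ℝ) < (n : ℝ) := by linarith
      have hsplit : (n : ℝ) ^ θ = (n : ℝ) ^ (θ - 1) * (n : ℝ) := by
        rw [← Real.rpow_add_one (ne_of_gt hnpos) (θ - 1)]
        ring_nf
      have : (n : ℝ) ^ θ ≤ (n : ℝ) / 16 := by
        rw [hsplit]
        calc (n : ℝ) ^ (θ - 1) * (n : ℝ) ≤ (1 / 16) * (n : ℝ) := by
              apply mul_le_mul_of_nonneg_right hn (le_of_lt hnpos)
          _ = (n : ℝ) / 16 := by ring
      have hn48' : (48 : ℝ) ≤ (n : ℝ) := by exact_mod_cast hn48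
      linarith
    filter_upwards [h34, eventually_ge_atTop 16,
      eventually_ge_atTop (2 * (Nl + Nr + Np + 1))] with n h1 h2 h3
    exact ⟨⟨h1, h2⟩, by omega⟩
  obtain ⟨N, hN⟩ := eventually_atTop.1 hev
  refine ⟨Cp + Cr + 2 * K * ((8 * Cp + Cl) * (8 * Cp + Cr)), N, fun n hn => ?_⟩
  obtain ⟨⟨hDspace, hn16⟩, hNsmall⟩ := hN n hn
  -- window geometry
  set h : ℕ := n - n / 2 with hhdef
  set m : ℕ := n / 8 + 1 with hmdef
  set D : ℕ := ⌊(n : ℝ) ^ θ⌋₊ + 1 with hDdef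
  have hnpos : (0 : ℝ) < (n : ℝ) := by
    have : (16 : ℝ) ≤ (n : ℝ) := by exact_mod_cast hn16
    linarith
  have hn1 : (1 : ℝ) ≤ (n : ℝ) := by
    exact_mod_cast Nat.one_le_iff_ne_zero.2 (by omega)
  have hDlow : (n : ℝ) ^ θ < (D : ℝ) := by
    rw [hDdef]; push_cast
    exact Nat.lt_floor_add_one _
  have hDup : (D : ℝ) ≤ (n : ℝ) ^ θ + 1 := by
    rw [hDdef]; push_cast
    have := Nat.floor_le (show (0:ℝ) ≤ (n : ℝ) ^ θ by positivity)
    linarith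
  have hD38 : 8 * D + 16 ≤ 3 * n := by
    have : (8 : ℝ) * (D : ℝ) + 16 ≤ 3 * (n : ℝ) := by
      have := hDup.trans hDspace
      linarith
    exact_mod_cast this
  have hgeo1 : h + m ≤ n - D := by omega
  have hD1 : 1 ≤ D := by omega
  have hDn : D ≤ n := by omega
  have h2h : n ≤ 2 * h := by omega
  have hhmn : h + m ≤ n := by omega
  have hh2 : n / 2 ≤ h := by omega
  -- choose good levels by averaging
  obtain ⟨js, hjs_mem, hjs⟩ := exists_window_min (Lam L) (show h < h + m by omega)
  obtain ⟨js', hjs'_mem, hjs'⟩ := exists_window_min (Rn L) (show h < h + m by omega)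
  obtain ⟨τ, hτ_mem, hτ⟩ := exists_window_min (Rn L) (show n - D < n by omega)
  rw [Nat.add_sub_cancel_left] at hjs hjs'
  rw [show n - (n - D) = D from by omega] at hτ
  obtain ⟨hjs_lo, hjs_hi⟩ := Finset.mem_Ico.1 hjs_mem
  obtain ⟨hjs'_lo, hjs'_hi⟩ := Finset.mem_Ico.1 hjs'_mem
  obtain ⟨hτ_lo, hτ_hi⟩ := Finset.mem_Ico.1 hτ_mem
  -- generic real bounds
  have hmono_rpow : ∀ (i : ℕ) (e : ℝ), 0 ≤ e → i ≤ n → ((i:ℝ)) ^ e ≤ (n:ℝ) ^ e := by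
    intro i e he hi
    exact Real.rpow_le_rpow (by positivity) (by exact_mod_cast hi) he
  have hβ0 : (0:ℝ) ≤ β := by linarith
  have hcplx_le : ∀ b : ℕ, Np ≤ b → b ≤ n → (cplx L b : ℝ) ≤ Cp * (n:ℝ) ^ β := by
    intro b h1 h2
    calc (cplx L b : ℝ) ≤ Cp * (b:ℝ) ^ β := hp b h1
      _ ≤ Cp * (n:ℝ) ^ β :=
          mul_le_mul_of_nonneg_left (hmono_rpow b β hβ0 h2) (by linarith)
  have hEbound : ∀ (f : ℕ → ℕ) (Cf : ℝ) (Nf : ℕ),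
      (∀ i ≥ Nf, (f i : ℝ) ≤ Cf * (i:ℝ)^α) → 0 ≤ Cf → ∀ a b : ℕ, Nf ≤ a → b ≤ n →
      ((∑ i ∈ Finset.Ico a b, f i : ℕ) : ℝ) ≤ ((b - a : ℕ) : ℝ) * (Cf * (n:ℝ)^α) := by
    intro f Cf Nf hf hCf0 a b ha hb
    push_cast
    calc (∑ i ∈ Finset.Ico a b, (f i : ℝ))
        ≤ ∑ _i ∈ Finset.Ico a b, (Cf * (n:ℝ)^α) := by
          apply Finset.sum_le_sum
          intro i hi
          obtain ⟨hi1, hi2⟩ := Finset.mem_Ico.1 hi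
          calc (f i : ℝ) ≤ Cf * (i:ℝ)^α := hf i (by omega)
            _ ≤ Cf * (n:ℝ)^α :=
                mul_le_mul_of_nonneg_left (hmono_rpow i α hα (by omega)) hCf0
      _ = ((b - a : ℕ) : ℝ) * (Cf * (n:ℝ)^α) := by
          rw [Finset.sum_const, Nat.card_Ico, nsmul_eq_mul]
  -- the three window-average bounds
  have hSL : ((m : ℕ) : ℝ) * ((Lam L js : ℕ) : ℝ) ≤ Cp * (n:ℝ)^β + (m:ℝ) * (Cl * (n:ℝ)^α) := by
    have hid := sum_Lam_window L hfac (show h ≤ h + m by omega)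
    have hnat : (∑ i ∈ Finset.Ico h (h+m), Lam L i)
        ≤ cplx L (h+m) + ∑ i ∈ Finset.Ico h (h+m), eL L i := by omega
    have hc1 : ((m : ℕ) : ℝ) * ((Lam L js : ℕ) : ℝ)
        ≤ ((∑ i ∈ Finset.Ico h (h+m), Lam L i : ℕ) : ℝ) := by exact_mod_cast hjs
    have hc2 : ((∑ i ∈ Finset.Ico h (h+m), Lam L i : ℕ) : ℝ)
        ≤ ((cplx L (h+m) : ℕ) : ℝ) + ((∑ i ∈ Finset.Ico h (h+m), eL L i : ℕ) : ℝ) := by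
      exact_mod_cast hnat
    have hc3 := hcplx_le (h+m) (by omega) hhmn
    have hc4 := hEbound (eL L) Cl Nl hel (by linarith) h (h+m) (by omega) hhmn
    rw [Nat.add_sub_cancel_left] at hc4
    linarith
  have hSR : ((m : ℕ) : ℝ) * ((Rn L js' : ℕ) : ℝ) ≤ Cp * (n:ℝ)^β + (m:ℝ) * (Cr * (n:ℝ)^α) := by
    have hid := sum_Rn_window L hfac (show h ≤ h + m by omega)
    have hnat : (∑ i ∈ Finset.Ico h (h+m), Rn L i)
        ≤ cplx L (h+m) + ∑ i ∈ Finset.Ico h (h+m), eR L i := by omega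
    have hc1 : ((m : ℕ) : ℝ) * ((Rn L js' : ℕ) : ℝ)
        ≤ ((∑ i ∈ Finset.Ico h (h+m), Rn L i : ℕ) : ℝ) := by exact_mod_cast hjs'
    have hc2 : ((∑ i ∈ Finset.Ico h (h+m), Rn L i : ℕ) : ℝ)
        ≤ ((cplx L (h+m) : ℕ) : ℝ) + ((∑ i ∈ Finset.Ico h (h+m), eR L i : ℕ) : ℝ) := by
      exact_mod_cast hnat
    have hc3 := hcplx_le (h+m) (by omega) hhmn
    have hc4 := hEbound (eR L) Cr Nr her (by linarith) h (h+m) (by omega) hhmn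
    rw [Nat.add_sub_cancel_left] at hc4
    linarith
  have hSτ : ((D : ℕ) : ℝ) * ((Rn L τ : ℕ) : ℝ) ≤ Cp * (n:ℝ)^β + (D:ℝ) * (Cr * (n:ℝ)^α) := by
    have hid := sum_Rn_window L hfac (show n - D ≤ n by omega)
    have hnat : (∑ i ∈ Finset.Ico (n-D) n, Rn L i)
        ≤ cplx L n + ∑ i ∈ Finset.Ico (n-D) n, eR L i := by omega
    have hc1 : ((D : ℕ) : ℝ) * ((Rn L τ : ℕ) : ℝ)
        ≤ ((∑ i ∈ Finset.Ico (n-D) n, Rn L i : ℕ) : ℝ) := by exact_mod_cast hτ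
    have hc2 : ((∑ i ∈ Finset.Ico (n-D) n, Rn L i : ℕ) : ℝ)
        ≤ ((cplx L n : ℕ) : ℝ) + ((∑ i ∈ Finset.Ico (n-D) n, eR L i : ℕ) : ℝ) := by
      exact_mod_cast hnat
    have hc3 := hcplx_le n (by omega) le_rfl
    have hc4 := hEbound (eR L) Cr Nr her (by linarith) (n-D) n (by omega) le_rfl
    rw [show n - (n - D) = D from by omega] at hc4
    linarith
  -- individual bounds
  have hm8 : (n : ℝ) / 8 ≤ (m : ℝ) := by
    have : n ≤ 8 * m := by omega
    have : (n:ℝ) ≤ 8 * (m:ℝ) := by exact_mod_cast this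
    linarith
  have hmpos : (0:ℝ) < (m:ℝ) := by positivity
  have hbsplit : (n:ℝ)^(β-1) * (n:ℝ) = (n:ℝ)^β := by
    rw [← Real.rpow_add_one (ne_of_gt hnpos) (β - 1)]
    ring_nf
  have hLamjs : ((Lam L js : ℕ) : ℝ) ≤ 8*Cp*(n:ℝ)^(β-1) + Cl*(n:ℝ)^α := by
    have key : Cp * (n:ℝ)^β + (m:ℝ) * (Cl * (n:ℝ)^α)
        ≤ (m:ℝ) * (8*Cp*(n:ℝ)^(β-1) + Cl*(n:ℝ)^α) := by
      have h1 : Cp * (n:ℝ)^β = ((n:ℝ)/8) * (8*Cp*(n:ℝ)^(β-1)) := by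
        rw [← hbsplit]; ring
      have h2 : ((n:ℝ)/8) * (8*Cp*(n:ℝ)^(β-1)) ≤ (m:ℝ) * (8*Cp*(n:ℝ)^(β-1)) := by
        apply mul_le_mul_of_nonneg_right hm8
        positivity
      have h3 : (m:ℝ) * (8*Cp*(n:ℝ)^(β-1) + Cl*(n:ℝ)^α)
          = (m:ℝ) * (8*Cp*(n:ℝ)^(β-1)) + (m:ℝ) * (Cl*(n:ℝ)^α) := by ring
      linarith
    have := hSL.trans key
    exact le_of_mul_le_mul_left this hmpos
  have hRjs' : ((Rn L js' : ℕ) : ℝ) ≤ 8*Cp*(n:ℝ)^(β-1) + Cr*(n:ℝ)^α := by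
    have key : Cp * (n:ℝ)^β + (m:ℝ) * (Cr * (n:ℝ)^α)
        ≤ (m:ℝ) * (8*Cp*(n:ℝ)^(β-1) + Cr*(n:ℝ)^α) := by
      have h1 : Cp * (n:ℝ)^β = ((n:ℝ)/8) * (8*Cp*(n:ℝ)^(β-1)) := by
        rw [← hbsplit]; ring
      have h2 : ((n:ℝ)/8) * (8*Cp*(n:ℝ)^(β-1)) ≤ (m:ℝ) * (8*Cp*(n:ℝ)^(β-1)) := by
        apply mul_le_mul_of_nonneg_right hm8
        positivity
      have h3 : (m:ℝ) * (8*Cp*(n:ℝ)^(β-1) + Cr*(n:ℝ)^α)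
          = (m:ℝ) * (8*Cp*(n:ℝ)^(β-1)) + (m:ℝ) * (Cr*(n:ℝ)^α) := by ring
      linarith
    have := hSR.trans key
    exact le_of_mul_le_mul_left this hmpos
  have hDpos : (0:ℝ) < (D:ℝ) := by
    have : (1:ℝ) ≤ (D:ℝ) := by exact_mod_cast hD1
    linarith
  have hθsplit : (n:ℝ)^(β-θ) * (n:ℝ)^θ = (n:ℝ)^β := by
    rw [← Real.rpow_add hnpos]; ring_nf
  have hRτ : ((Rn L τ : ℕ) : ℝ) ≤ Cp*(n:ℝ)^(β-θ) + Cr*(n:ℝ)^α := by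
    have key : Cp * (n:ℝ)^β + (D:ℝ) * (Cr * (n:ℝ)^α)
        ≤ (D:ℝ) * (Cp*(n:ℝ)^(β-θ) + Cr*(n:ℝ)^α) := by
      have h1 : Cp * (n:ℝ)^β = (n:ℝ)^θ * (Cp*(n:ℝ)^(β-θ)) := by
        rw [← hθsplit]; ring
      have h2 : (n:ℝ)^θ * (Cp*(n:ℝ)^(β-θ)) ≤ (D:ℝ) * (Cp*(n:ℝ)^(β-θ)) := by
        apply mul_le_mul_of_nonneg_right (le_of_lt hDlow)
        positivity
      have h3 : (D:ℝ) * (Cp*(n:ℝ)^(β-θ) + Cr*(n:ℝ)^α)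
          = (D:ℝ) * (Cp*(n:ℝ)^(β-θ)) + (D:ℝ) * (Cr*(n:ℝ)^α) := by ring
      linarith
    have := hSτ.trans key
    exact le_of_mul_le_mul_left this hDpos
  -- bispecial sum bound
  have hBsum : ((∑ i ∈ Finset.Ico τ n, Bn L i : ℕ) : ℝ)
      ≤ (D:ℝ) * (((Lam L js : ℕ):ℝ) * ((Rn L js' : ℕ):ℝ)) := by
    have hnat : (∑ i ∈ Finset.Ico τ n, Bn L i) ≤ D * (Lam L js * Rn L js') := by
      calc ∑ i ∈ Finset.Ico τ n, Bn L i
          ≤ ∑ _i ∈ Finset.Ico τ n, (Lam L js * Rn L js') := by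
            apply Finset.sum_le_sum
            intro i hi
            obtain ⟨hi1, hi2⟩ := Finset.mem_Ico.1 hi
            have hb : Bn L i ≤ LSc L js * RSc L js' := by
              apply Bn_le_mul L hfac
              · omega
              · omega
              · omega
            calc Bn L i ≤ LSc L js * RSc L js' := hb
              _ ≤ Lam L js * Rn L js' :=
                  Nat.mul_le_mul (LSc_le_Lam L js) (RSc_le_Rn L js')
        _ = (n - τ) * (Lam L js * Rn L js') := by
            rw [Finset.sum_const, Nat.card_Ico, smul_eq_mul]
        _ ≤ D * (Lam L js * Rn L js') := by
            apply Nat.mul_le_mul_right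
            omega
    calc ((∑ i ∈ Finset.Ico τ n, Bn L i : ℕ) : ℝ)
        ≤ ((D * (Lam L js * Rn L js') : ℕ) : ℝ) := by exact_mod_cast hnat
      _ = (D:ℝ) * (((Lam L js : ℕ):ℝ) * ((Rn L js' : ℕ):ℝ)) := by push_cast; ring
  -- transport from τ to n
  have htrans : (Rn L n : ℝ) ≤ ((Rn L τ : ℕ):ℝ)
      + K * ((∑ i ∈ Finset.Ico τ n, Bn L i : ℕ) : ℝ) := by
    have := Rn_le_add_sum L hfac (show τ ≤ n by omega)
    have hc : ((Rn L n : ℕ):ℝ) ≤ ((Rn L τ : ℕ):ℝ)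
        + ((Fintype.card A)^2 : ℕ) * ((∑ i ∈ Finset.Ico τ n, Bn L i : ℕ) : ℝ) := by
      exact_mod_cast this
    rw [hKdef]
    push_cast at hc ⊢
    linarith
  -- final assembly
  have hβ1n : (n:ℝ)^(β-1) ≤ (n:ℝ)^γ :=
    Real.rpow_le_rpow_of_exponent_le hn1 (le_max_left _ _)
  have hαn : (n:ℝ)^α ≤ (n:ℝ)^γ :=
    Real.rpow_le_rpow_of_exponent_le hn1 (le_max_right _ _)
  have hαρn : (n:ℝ)^α ≤ (n:ℝ)^ρ :=
    Real.rpow_le_rpow_of_exponent_le hn1 hαρ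
  have hθ1 : (1:ℝ) ≤ (n:ℝ)^θ := Real.one_le_rpow hn1 (le_of_lt hθpos)
  have hD2θ : (D:ℝ) ≤ 2 * (n:ℝ)^θ := by linarith
  have hγn0 : (0:ℝ) ≤ (n:ℝ)^γ := by positivity
  have hρsplit : (n:ℝ)^θ * ((n:ℝ)^γ * (n:ℝ)^γ) = (n:ℝ)^ρ := by
    rw [← Real.rpow_add hnpos, ← Real.rpow_add hnpos, hρθ]
    ring_nf
  have hLam2 : ((Lam L js : ℕ) : ℝ) ≤ (8*Cp + Cl) * (n:ℝ)^γ := by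
    calc ((Lam L js : ℕ) : ℝ) ≤ 8*Cp*(n:ℝ)^(β-1) + Cl*(n:ℝ)^α := hLamjs
      _ ≤ 8*Cp*(n:ℝ)^γ + Cl*(n:ℝ)^γ := by
          have h1 : 8*Cp*(n:ℝ)^(β-1) ≤ 8*Cp*(n:ℝ)^γ :=
            mul_le_mul_of_nonneg_left hβ1n (by linarith)
          have h2 : Cl*(n:ℝ)^α ≤ Cl*(n:ℝ)^γ :=
            mul_le_mul_of_nonneg_left hαn (by linarith)
          linarith
      _ = (8*Cp + Cl) * (n:ℝ)^γ := by ring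
  have hRn2 : ((Rn L js' : ℕ) : ℝ) ≤ (8*Cp + Cr) * (n:ℝ)^γ := by
    calc ((Rn L js' : ℕ) : ℝ) ≤ 8*Cp*(n:ℝ)^(β-1) + Cr*(n:ℝ)^α := hRjs'
      _ ≤ 8*Cp*(n:ℝ)^γ + Cr*(n:ℝ)^γ := by
          have h1 : 8*Cp*(n:ℝ)^(β-1) ≤ 8*Cp*(n:ℝ)^γ :=
            mul_le_mul_of_nonneg_left hβ1n (by linarith)
          have h2 : Cr*(n:ℝ)^α ≤ Cr*(n:ℝ)^γ :=
            mul_le_mul_of_nonneg_left hαn (by linarith)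
          linarith
      _ = (8*Cp + Cr) * (n:ℝ)^γ := by ring
  have hLam0 : (0:ℝ) ≤ ((Lam L js : ℕ) : ℝ) := by positivity
  have hRn0 : (0:ℝ) ≤ ((Rn L js' : ℕ) : ℝ) := by positivity
  calc (Rn L n : ℝ)
      ≤ ((Rn L τ : ℕ):ℝ) + K * ((∑ i ∈ Finset.Ico τ n, Bn L i : ℕ) : ℝ) := htrans
    _ ≤ (Cp*(n:ℝ)^(β-θ) + Cr*(n:ℝ)^α)
        + K * ((D:ℝ) * (((Lam L js : ℕ):ℝ) * ((Rn L js' : ℕ):ℝ))) := by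
        have h4 := mul_le_mul_of_nonneg_left hBsum hK0
        linarith
    _ ≤ (Cp*(n:ℝ)^ρ + Cr*(n:ℝ)^ρ)
        + K * ((2*(n:ℝ)^θ) * (((8*Cp + Cl) * (n:ℝ)^γ) * ((8*Cp + Cr) * (n:ℝ)^γ))) := by
        have e1 : (n:ℝ)^(β-θ) = (n:ℝ)^ρ := by rw [hρβ]
        rw [e1]
        have h3 : (D:ℝ) * (((Lam L js : ℕ):ℝ) * ((Rn L js' : ℕ):ℝ))
            ≤ (2*(n:ℝ)^θ) * (((8*Cp + Cl) * (n:ℝ)^γ) * ((8*Cp + Cr) * (n:ℝ)^γ)) := by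
          apply mul_le_mul hD2θ
          · apply mul_le_mul hLam2 hRn2 hRn0 (by positivity)
          · positivity
          · positivity
        have h4 := mul_le_mul_of_nonneg_left h3 hK0
        have h2' : Cr*(n:ℝ)^α ≤ Cr*(n:ℝ)^ρ :=
          mul_le_mul_of_nonneg_left hαρn (by linarith)
        linarith
    _ = (Cp + Cr + 2 * K * ((8 * Cp + Cl) * (8 * Cp + Cr))) * (n:ℝ)^ρ := by
        rw [← hρsplit]
        ring

end RauzyAux

namespace RauzyAux
open Finset

set_option maxHeartbeats 1000000 in
theorem main {A : Type*} [Fintype A]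
    (L : Set (List A)) (hfac : IsFactorial L)
    (α β : ℝ) (hα : α ∈ Set.Ico (0 : ℝ) (1 / 2)) (hβ : β ∈ Set.Ico (1 : ℝ) (3 / 2))
    (helO : ∃ C : ℝ, ∃ N : ℕ, ∀ n ≥ N, (eL L n : ℝ) ≤ C * (n : ℝ) ^ α)
    (herO : ∃ C : ℝ, ∃ N : ℕ, ∀ n ≥ N, (eR L n : ℝ) ≤ C * (n : ℝ) ^ α)
    (hpO : ∃ C : ℝ, ∃ N : ℕ, ∀ n ≥ N, (cplx L n : ℝ) ≤ C * (n : ℝ) ^ β)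
    (hpΩ : ∃ C : ℝ, ∃ N : ℕ, ∀ n ≥ N, (n : ℝ) ^ β ≤ C * (cplx L n : ℝ)) :
    Tendsto (fun n => (cplx L (n + 1) : ℝ) / (cplx L n : ℝ)) atTop (𝓝 1) := by
  classical
  obtain ⟨hα0, hα2⟩ := hα
  obtain ⟨hβ1, hβ2⟩ := hβ
  obtain ⟨Cl₀, Nl, hel₀⟩ := helO
  obtain ⟨Cr₀, Nr, her₀⟩ := herO
  obtain ⟨Cp₀, Np, hp₀⟩ := hpO
  obtain ⟨Co₀, No, ho₀⟩ := hpΩ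
  set Cl : ℝ := max Cl₀ 1 with hCldef
  set Cr : ℝ := max Cr₀ 1 with hCrdef
  set Cp : ℝ := max Cp₀ 1 with hCpdef
  set Co : ℝ := max Co₀ 1 with hCodef
  have hCl1 : (1:ℝ) ≤ Cl := le_max_right _ _
  have hCr1 : (1:ℝ) ≤ Cr := le_max_right _ _
  have hCp1 : (1:ℝ) ≤ Cp := le_max_right _ _
  have hCo1 : (1:ℝ) ≤ Co := le_max_right _ _
  have hel : ∀ n ≥ Nl, (eL L n : ℝ) ≤ Cl * (n : ℝ) ^ α := fun n hn =>
    (hel₀ n hn).trans (mul_le_mul_of_nonneg_right (le_max_left _ _) (by positivity))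
  have her : ∀ n ≥ Nr, (eR L n : ℝ) ≤ Cr * (n : ℝ) ^ α := fun n hn =>
    (her₀ n hn).trans (mul_le_mul_of_nonneg_right (le_max_left _ _) (by positivity))
  have hp : ∀ n ≥ Np, (cplx L n : ℝ) ≤ Cp * (n : ℝ) ^ β := fun n hn =>
    (hp₀ n hn).trans (mul_le_mul_of_nonneg_right (le_max_left _ _) (by positivity))
  have ho : ∀ n ≥ No, (n : ℝ) ^ β ≤ Co * (cplx L n : ℝ) := fun n hn =>
    (ho₀ n hn).trans (mul_le_mul_of_nonneg_right (le_max_left _ _) (by positivity))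
  obtain ⟨C, NR, hRbound⟩ := Rn_poly_bound L hfac α β Cl Cr Cp Nl Nr Np
    hα0 hα2 hβ1 hβ2 hCl1 hCr1 hCp1 hel her hp
  set γ : ℝ := max (β - 1) α with hγdef
  set ρ : ℝ := (β + 2 * γ) / 2 with hρdef
  have hγlt : γ < 1/2 := max_lt (by linarith) hα2
  have hργ : ρ < β := by simp only [hρdef]; linarith
  have hαρ : α ≤ ρ := by
    have : α ≤ γ := le_max_right _ _
    simp only [hρdef]; linarith
  have hC0 : (0:ℝ) ≤ C := by
    have h1 := hRbound (max NR 1) (le_max_left _ _)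
    have h2 : (0:ℝ) ≤ (Rn L (max NR 1) : ℝ) := by positivity
    have h3 : (0:ℝ) < ((max NR 1 : ℕ):ℝ) ^ ρ := by
      apply Real.rpow_pos_of_pos
      have : (1:ℕ) ≤ max NR 1 := le_max_right _ _
      exact_mod_cast lt_of_lt_of_le zero_lt_one (by exact_mod_cast this)
    nlinarith
  -- pointwise difference bound
  have hdiff : ∀ n, (cplx L (n+1) : ℝ) - (cplx L n : ℝ) ≤ (Rn L n : ℝ) ∧
      (cplx L n : ℝ) - (cplx L (n+1) : ℝ) ≤ (eR L n : ℝ) := by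
    intro n
    have hid := Rn_identity L hfac n
    constructor
    · have : cplx L (n+1) ≤ cplx L n + Rn L n := by omega
      have := (Nat.cast_le (α := ℝ)).2 this
      push_cast at this
      linarith
    · have : cplx L n ≤ cplx L (n+1) + eR L n := by omega
      have := (Nat.cast_le (α := ℝ)).2 this
      push_cast at this
      linarith
  -- the squeeze function
  have hconc : ∀ᶠ n : ℕ in atTop,
      |(cplx L (n+1) : ℝ) / (cplx L n : ℝ) - 1| ≤ ((C + Cr) * Co) * (n:ℝ) ^ (ρ - β) := by
    filter_upwards [eventually_ge_atTop NR, eventually_ge_atTop No,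
      eventually_ge_atTop Nr, eventually_ge_atTop 1] with n h1 h2 h3 h4
    have hn1 : (1:ℝ) ≤ (n:ℝ) := by exact_mod_cast h4
    have hnpos : (0:ℝ) < (n:ℝ) := by linarith
    have hβpos : (0:ℝ) < (n:ℝ)^β := Real.rpow_pos_of_pos hnpos β
    have hppos : (0:ℝ) < (cplx L n : ℝ) := by
      have hCoP : (0:ℝ) < Co * (cplx L n : ℝ) := lt_of_lt_of_le hβpos (ho n h2)
      nlinarith [hCoP, hCo1]
    have heq : (cplx L (n+1) : ℝ) / (cplx L n : ℝ) - 1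
        = ((cplx L (n+1) : ℝ) - (cplx L n : ℝ)) / (cplx L n : ℝ) := by
      field_simp
    have habs2 : |(cplx L (n+1) : ℝ) - (cplx L n : ℝ)| ≤ (Rn L n : ℝ) + (eR L n : ℝ) := by
      obtain ⟨hd1, hd2⟩ := hdiff n
      have he0 : (0:ℝ) ≤ (eR L n : ℝ) := by positivity
      have hr0 : (0:ℝ) ≤ (Rn L n : ℝ) := by positivity
      rw [abs_sub_le_iff]
      constructor
      · linarith
      · linarith
    have hnum : (Rn L n : ℝ) + (eR L n : ℝ) ≤ (C + Cr) * (n:ℝ)^ρ := by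
      have hR := hRbound n h1
      have he := her n h3
      have hα' : (n:ℝ)^α ≤ (n:ℝ)^ρ := Real.rpow_le_rpow_of_exponent_le hn1 hαρ
      have he2 : (eR L n:ℝ) ≤ Cr * (n:ℝ)^ρ :=
        he.trans (mul_le_mul_of_nonneg_left hα' (by linarith))
      have : (C + Cr) * (n:ℝ)^ρ = C * (n:ℝ)^ρ + Cr * (n:ℝ)^ρ := by ring
      linarith
    have hfrac1 : |(cplx L (n+1) : ℝ) - (cplx L n : ℝ)| / (cplx L n : ℝ)
        ≤ ((C + Cr) * (n:ℝ)^ρ) / (cplx L n : ℝ) := by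
      exact (div_le_div_iff_of_pos_right hppos).2 (habs2.trans hnum)
    have hfrac2 : ((C + Cr) * (n:ℝ)^ρ) / (cplx L n : ℝ)
        ≤ ((C + Cr) * (n:ℝ)^ρ) * Co / (n:ℝ)^β := by
      rw [div_le_div_iff₀ hppos hβpos]
      have hnonneg : (0:ℝ) ≤ (C + Cr) * (n:ℝ)^ρ := by positivity
      have := mul_le_mul_of_nonneg_left (ho n h2) hnonneg
      nlinarith [this]
    have hrw : ((C + Cr) * Co) * (n:ℝ) ^ (ρ - β)
        = ((C + Cr) * (n:ℝ)^ρ) * Co / (n:ℝ)^β := by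
      rw [Real.rpow_sub hnpos]
      ring
    calc |(cplx L (n+1) : ℝ) / (cplx L n : ℝ) - 1|
        = |(cplx L (n+1) : ℝ) - (cplx L n : ℝ)| / (cplx L n : ℝ) := by
          rw [heq, abs_div, abs_of_pos hppos]
      _ ≤ ((C + Cr) * (n:ℝ)^ρ) / (cplx L n : ℝ) := hfrac1
      _ ≤ ((C + Cr) * (n:ℝ)^ρ) * Co / (n:ℝ)^β := hfrac2
      _ = ((C + Cr) * Co) * (n:ℝ) ^ (ρ - β) := hrw.symm
  have hzero : Tendsto (fun n : ℕ => ((C + Cr) * Co) * (n:ℝ) ^ (ρ - β)) atTop (𝓝 0) := by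
    have h1 : Tendsto (fun x : ℝ => x ^ (ρ - β)) atTop (𝓝 0) := by
      have := tendsto_rpow_neg_atTop (y := β - ρ) (by linarith)
      simpa [neg_sub] using this
    have h2 : Tendsto (fun n : ℕ => ((n:ℝ)) ^ (ρ - β)) atTop (𝓝 0) :=
      h1.comp tendsto_natCast_atTop_atTop
    simpa using h2.const_mul ((C + Cr) * Co)
  have hf0 : Tendsto (fun n : ℕ => (cplx L (n+1):ℝ)/(cplx L n : ℝ) - 1) atTop (𝓝 0) :=
    squeeze_zero_norm' (by simpa [Real.norm_eq_abs] using hconc) hzero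
  have hfinal := hf0.add (tendsto_const_nhds (x := (1:ℝ)) (f := atTop))
  simpa using hfinal

end RauzyAux


theorem complexity_ratio_tendsto_one_of_bigTheta {A : Type*} [Fintype A]
    (L : Set (List A)) (hfac : IsFactorial L) (hap : AlmostProlongable L)
    (hunb : ∀ M : ℕ, ∃ n : ℕ, M < cplx L n)
    (N₀ : ℕ) (he : ∀ n ≥ N₀, eBoth L n = 0)
    (α β : ℝ) (hα : α ∈ Set.Ico (0 : ℝ) (1 / 2)) (hβ : β ∈ Set.Ico (1 : ℝ) (3 / 2))
    (helO : ∃ C : ℝ, ∃ N : ℕ, ∀ n ≥ N, (eL L n : ℝ) ≤ C * (n : ℝ) ^ α)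
    (herO : ∃ C : ℝ, ∃ N : ℕ, ∀ n ≥ N, (eR L n : ℝ) ≤ C * (n : ℝ) ^ α)
    (hpO : ∃ C : ℝ, ∃ N : ℕ, ∀ n ≥ N, (cplx L n : ℝ) ≤ C * (n : ℝ) ^ β)
    (hpΩ : ∃ C : ℝ, ∃ N : ℕ, ∀ n ≥ N, (n : ℝ) ^ β ≤ C * (cplx L n : ℝ)) :
    Tendsto (fun n => (cplx L (n + 1) : ℝ) / (cplx L n : ℝ)) atTop (𝓝 1) :=
  RauzyAux.main L hfac α β hα hβ helO herO hpO hpΩ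
end

section
/- Let A be a finite alphabet and let Σ ⊆ A^ℕ be a nonempty closed set with S(Σ) ⊆ Σ, where S is the shift map. Suppose F ⊆ Σ is a finite set such that the set {S^m(ω) : ω ∈ F, m ∈ ℕ} is dense in Σ. Then for every n, the number of words of length n in the language L(Σ) that are not left-prolongable is at most |F|. (Lemma 2.12 of the paper.) -/
open Filter Topology

variable {A : Type*}

/-- The one-sided shift map on `ℕ → A`. -/
def shiftMap (ω : ℕ → A) : ℕ → A := fun i => ω (i + 1)

/-- The language of a one-sided subshift `Ω ⊆ A^ℕ`: all finite words occurring in some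
element of `Ω`. -/
def subshiftLang (Ω : Set (ℕ → A)) : Set (List A) :=
  {w | ∃ ω ∈ Ω, ∃ m : ℕ, w = (List.range w.length).map fun i => ω (m + i)}

lemma shiftMap_iterate_apply {A : Type*} (m : ℕ) (ω : ℕ → A) (j : ℕ) :
    shiftMap^[m] ω j = ω (m + j) := by
  induction m generalizing ω j with
  | zero => simp
  | succ m ih =>
    rw [Function.iterate_succ_apply, ih]
    show ω (m + j + 1) = ω (m + 1 + j)
    congr 1; omega

lemma shiftMap_iterate_mem {A : Type*} {Ω : Set (ℕ → A)}
    (hinv : shiftMap '' Ω ⊆ Ω) (m : ℕ) {ω : ℕ → A} (hω : ω ∈ Ω) :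
    shiftMap^[m] ω ∈ Ω := by
  induction m with
  | zero => simpa using hω
  | succ m ih => rw [Function.iterate_succ_apply']; exact hinv ⟨_, ih, rfl⟩

theorem card_not_left_prolongable_le_of_finite_dense_orbit
    {A : Type*} [Fintype A] [TopologicalSpace A] [DiscreteTopology A]
    (Ω : Set (ℕ → A)) (hne : Ω.Nonempty) (hcl : IsClosed Ω)
    (hinv : shiftMap '' Ω ⊆ Ω)
    (F : Set (ℕ → A)) (hF : F.Finite) (hFΩ : F ⊆ Ω)
    (hdense : Ω ⊆ closure {x | ∃ ω ∈ F, ∃ m : ℕ, x = shiftMap^[m] ω}) :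
    ∀ n : ℕ, eL (subshiftLang Ω) n ≤ Nat.card F := by
  intro n
  classical
  set L := subshiftLang Ω with hL
  have key : ∀ w : List A, w ∈ Ln L n → ¬ LeftProlongable L w →
      ∃ ω₀ ∈ F, w = (List.range n).map fun i => ω₀ i := by
    rintro w ⟨⟨ω, hω, m, hw⟩, hlen⟩ hnp
    rw [hlen] at hw
    -- ω' ∈ Ω has w as a prefix
    set ω' : ℕ → A := shiftMap^[m] ω with hω'
    have hω'Ω : ω' ∈ Ω := shiftMap_iterate_mem hinv m hω
    have hw' : w = (List.range n).map fun i => ω' i := by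
      rw [hw]
      exact List.map_congr_left fun i _ => (shiftMap_iterate_apply m ω i).symm
    -- the cylinder set
    set U : Set (ℕ → A) := ⋂ i ∈ Finset.range n, {x : ℕ → A | x i = ω' i} with hU
    have hUopen : IsOpen U := isOpen_biInter_finset fun i _ => by
      have : {x : ℕ → A | x i = ω' i} = (fun x : ℕ → A => x i) ⁻¹' {ω' i} := rfl
      rw [this]
      exact (isOpen_discrete _).preimage (continuous_apply i)
    have hω'U : ω' ∈ U := by
      simp [hU]
    obtain ⟨x, hxU, ω₀, hω₀F, k, hxk⟩ :=
      mem_closure_iff.mp (hdense hω'Ω) U hUopen hω'U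
    have hx : ∀ i < n, ω₀ (k + i) = ω' i := by
      intro i hi
      have := Set.mem_iInter₂.mp hxU i (Finset.mem_range.mpr hi)
      rw [hxk] at this
      rw [← this, shiftMap_iterate_apply]
    have hwk : w = (List.range n).map fun i => ω₀ (k + i) := by
      rw [hw']
      exact List.map_congr_left fun i hi => (hx i (List.mem_range.mp hi)).symm
    -- k must be 0
    rcases Nat.eq_zero_or_pos k with hk0 | hkpos
    · refine ⟨ω₀, hω₀F, ?_⟩
      rw [hwk, hk0]; simp
    · exfalso
      apply hnp
      obtain ⟨k', rfl⟩ : ∃ k', k = k' + 1 := ⟨k - 1, by omega⟩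
      refine ⟨ω₀ k', ⟨ω₀, hFΩ hω₀F, k', ?_⟩⟩
      have hlen1 : (ω₀ k' :: w).length = n + 1 := by simp [hlen]
      rw [hlen1, List.range_succ_eq_map, List.map_cons, List.map_map]
      congr 1
      · rw [hwk]
        exact List.map_congr_left fun i _ => by
          show ω₀ (k' + 1 + i) = ω₀ (k' + (i + 1))
          congr 1; omega
  -- build an injection into F
  have : Finite F := hF.to_subtype
  set T := {w : List A | w ∈ Ln L n ∧ ¬ LeftProlongable L w} with hT
  have hf : ∀ w : T, ∃ ω₀ : F, (w : List A) = (List.range n).map fun i => (ω₀ : ℕ → A) i := by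
    rintro ⟨w, hw1, hw2⟩
    obtain ⟨ω₀, hω₀F, h⟩ := key w hw1 hw2
    exact ⟨⟨ω₀, hω₀F⟩, h⟩
  choose f hfspec using hf
  have hinj : Function.Injective f := by
    intro w w' heq
    apply Subtype.ext
    rw [hfspec w, hfspec w', heq]
  exact Nat.card_le_card_of_injective f hinj
end

section
/- Let A be a finite nonempty type, X = (ℤ → A) with the product measurable structure (where A carries the discrete σ-algebra), and let T : X → X be the shift, (Tx)(n) = x(n+1), which is a measurable bijection with measurable inverse (T⁻¹x)(n) = x(n−1). Let μ be a probability measure on X and let ν be the measure on X × Bool given by the sum of the pushforwards of μ under x ↦ (x, true) and x ↦ (x, false). Define R : X × Bool → X × Bool by R(x, true) = (Tx, false) and R(x, false) = (T⁻¹x, true). If the pushforward of ν under R equals ν, then the pushforward of μ under T equals μ, i.e., μ is shift-invariant. (This is the content of Lemma 'inv' of the paper: a unimodular random labelling of the bi-infinite line is shift-invariant.) -/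
/-!
Since `R` sends the sheet `X × {true}` to `X × {false}` via `T`, the preimage under `R` of
`s × {false}` is `T⁻¹ s × {true}`. The flagged measure gives each sheet the mass of `μ`, so
`R`-invariance reads `μ (T⁻¹ s) = μ s`.
-/

open MeasureTheory

theorem measurable_of_apply_eq_apply_reindex {ι κ α : Type*} [MeasurableSpace α]
    {F : (κ → α) → ι → α} {f : ι → κ} (hF : ∀ x n, F x n = x (f n)) : Measurable F :=
  measurable_pi_lambda F fun n => by simpa only [hF] using measurable_pi_apply (f n)

namespace MeasureTheory.Measure

variable {α : Type*} [MeasurableSpace α]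

noncomputable def flagged (μ : Measure α) : Measure (α × Bool) :=
  μ.map (·, true) + μ.map (·, false)

theorem flagged_apply_prod_singleton (μ : Measure α) {s : Set α} (hs : MeasurableSet s)
    (b : Bool) : μ.flagged (s ×ˢ {b}) = μ s := by
  have hsb : MeasurableSet (s ×ˢ {b}) := hs.prod (measurableSet_singleton b)
  rw [flagged, add_apply, map_apply measurable_prodMk_right hsb,
    map_apply measurable_prodMk_right hsb]
  cases b <;> simp

theorem map_eq_of_map_flagged_eq {μ : Measure α} {T S : α → α} {R : α × Bool → α × Bool}
    (hR : Measurable R) (hRtrue : ∀ x, R (x, true) = (T x, false))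
    (hRfalse : ∀ x, R (x, false) = (S x, true)) (hμ : μ.flagged.map R = μ.flagged) :
    μ.map T = μ := by
  have hT : Measurable T := by
    have hTR : T = Prod.fst ∘ R ∘ (·, true) := funext fun x => by simp [hRtrue]
    exact hTR ▸ measurable_fst.comp (hR.comp measurable_prodMk_right)
  ext s hs
  have hpre : R ⁻¹' (s ×ˢ {false}) = (T ⁻¹' s) ×ˢ {true} := by
    ext ⟨x, b⟩
    cases b <;> simp [hRtrue, hRfalse]
  have hsheet := congrArg (· (s ×ˢ {false})) hμ
  simp only [map_apply hR (hs.prod (measurableSet_singleton false)), hpre] at hsheet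
  rwa [map_apply hT hs, ← flagged_apply_prod_singleton μ (hT hs) true,
    ← flagged_apply_prod_singleton μ hs false]

end MeasureTheory.Measure

theorem shift_invariant_of_flag_reversal_invariant_general
    {A : Type*}
    [MeasurableSpace A]
    (μ : Measure (ℤ → A))
    (T : (ℤ → A) → (ℤ → A)) (hT : ∀ x n, T x n = x (n + 1))
    (Tinv : (ℤ → A) → (ℤ → A)) (hTinv : ∀ x n, Tinv x n = x (n - 1))
    (R : (ℤ → A) × Bool → (ℤ → A) × Bool)
    (hRtrue : ∀ x, R (x, true) = (T x, false))
    (hRfalse : ∀ x, R (x, false) = (Tinv x, true))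
    (ν : Measure ((ℤ → A) × Bool))
    (hν : ν = μ.map (fun x => (x, true)) + μ.map (fun x => (x, false)))
    (hRinv : ν.map R = ν) :
    μ.map T = μ := by
  have hR : Measurable R := measurable_from_prod_countable_left fun
    | true => by simpa only [hRtrue] using
        (measurable_of_apply_eq_apply_reindex hT).prodMk measurable_const
    | false => by simpa only [hRfalse] using
        (measurable_of_apply_eq_apply_reindex hTinv).prodMk measurable_const
  subst hν
  exact Measure.map_eq_of_map_flagged_eq hR hRtrue hRfalse hRinv

theorem shift_invariant_of_flag_reversal_invariant
    {A : Type*} [Fintype A] [Nonempty A]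
    [MeasurableSpace A] [DiscreteMeasurableSpace A]
    (μ : Measure (ℤ → A)) [IsProbabilityMeasure μ]
    (T : (ℤ → A) → (ℤ → A)) (hT : ∀ x n, T x n = x (n + 1))
    (Tinv : (ℤ → A) → (ℤ → A)) (hTinv : ∀ x n, Tinv x n = x (n - 1))
    (R : (ℤ → A) × Bool → (ℤ → A) × Bool)
    (hRtrue : ∀ x, R (x, true) = (T x, false))
    (hRfalse : ∀ x, R (x, false) = (Tinv x, true))
    (ν : Measure ((ℤ → A) × Bool))
    (hν : ν = μ.map (fun x => (x, true)) + μ.map (fun x => (x, false)))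
    (hRinv : ν.map R = ν) :
    μ.map T = μ :=
  shift_invariant_of_flag_reversal_invariant_general μ T hT Tinv hTinv R hRtrue hRfalse ν hν hRinv
end
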